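/- arXiv:math/0312177 — 3 statements merged into one kernel-verified Lean document; each statement's English description precedes it below -/
import Mathlib

section
/- Unitary reduction to diagonal weight: Let ρ : ℤ → ℂ^{m×m} be self-adjoint and invertible. Then there exist unitary matrices Q(k) ∈ ℂ^{m×m} and diagonal real matrices d(k) ∈ ℝ^{m×m} with d(k) > 0 (positive definite) and sign matrices ε̃(k) (diagonal with ±1 entries) such that the difference expression 𝒮_ρ − B is unitarily equivalent, via the block-diagonal transformations U_ρ(k) = diag(Q(k), Q(k−1)) and U_ε(k) = diag(ε̃(k), ε̃(k)), to an expression 𝒮_d − ℬ of the same form in which the weight d is diagonal and positive definite. -/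
open Matrix

/-!
Diagonalize each `ρ k = Q kᴴ Λ k Q k` with `Q k` unitary and `Λ k` real diagonal; `Λ k` is
invertible, so its entries are nonzero. Conjugating by `diag(ε k Q k, ε k Q (k-1))` turns the
weight into `d k = ε k Λ k ε (k+1)`, and the signs `ε` are found by a discrete integration on `ℤ`:
`ε (k+1) = ε k · sign Λ k` makes `d k = sign Λ k · Λ k = |Λ k|` positive. The coefficient `B`
is carried along by conjugation, which is legitimate because the block transformation is unitary.
-/

namespace Int

variable {G : Type*} [Group G]

def partialProd (σ : ℤ → G) (k : ℤ) : G :=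
  Int.inductionOn' (motive := fun _ => G) k 0 1 (fun j _ x => x * σ j)
    (fun j _ x => x * (σ (j - 1))⁻¹)

theorem partialProd_add_one (σ : ℤ → G) (k : ℤ) :
    partialProd σ (k + 1) = partialProd σ k * σ k := by
  rcases le_or_gt 0 k with hk | hk
  · exact Int.inductionOn'_add_one hk
  · have h := Int.inductionOn'_sub_one (motive := fun _ => G) (zero := 1)
      (succ := fun j _ x => x * σ j) (pred := fun j _ x => x * (σ (j - 1))⁻¹)
      (show k + 1 ≤ 0 by omega)
    rw [add_sub_cancel_right] at h
    simp only [partialProd, h, inv_mul_cancel_right]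

end Int

theorem exists_units_mul_succ_mul_pos {ι : Type*} (δ : ℤ → ι → ℝ) (hδ : ∀ k i, δ k i ≠ 0) :
    ∃ e : ℤ → ι → ℤˣ, ∀ k i, 0 < ((e k i * e (k + 1) i : ℤˣ) : ℝ) * δ k i := by
  classical
  let σ : ℤ → ι → ℤˣ := fun k i => if 0 < δ k i then 1 else -1
  refine ⟨Int.partialProd σ, fun k i => ?_⟩
  rw [Int.partialProd_add_one, Pi.mul_apply, ← mul_assoc, Int.units_mul_self, one_mul]
  rcases (hδ k i).lt_or_gt with h | h
  · simp [σ, h.not_gt, h]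
  · simp [σ, h]

theorem Matrix.IsHermitian.star_eigenvectorUnitary_mul {n 𝕜 : Type*} [Fintype n] [DecidableEq n]
    [RCLike 𝕜] {A : Matrix n n 𝕜} (hA : A.IsHermitian) :
    star (hA.eigenvectorUnitary : Matrix n n 𝕜) * A =
      diagonal (RCLike.ofReal ∘ hA.eigenvalues) * star (hA.eigenvectorUnitary : Matrix n n 𝕜) := by
  have h := hA.conjStarAlgAut_star_eigenvectorUnitary
  rw [Unitary.conjStarAlgAut_star_apply] at h
  rw [← h, mul_assoc _ _ (star _), Unitary.mul_star_self_of_mem (SetLike.coe_mem _), mul_one]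

theorem Matrix.IsHermitian.eigenvalues_ne_zero {n 𝕜 : Type*} [Fintype n] [DecidableEq n]
    [RCLike 𝕜] {A : Matrix n n 𝕜} (hA : A.IsHermitian) (hAu : IsUnit A) (i : n) :
    hA.eigenvalues i ≠ 0 := by
  have hdet := ((isUnit_iff_isUnit_det A).mp hAu).ne_zero
  rw [hA.det_eq_prod_eigenvalues, Finset.prod_ne_zero_iff] at hdet
  exact_mod_cast hdet i (Finset.mem_univ i)

theorem diagonal_units_mul_diagonal {n : Type*} [Fintype n] [DecidableEq n] (u v : n → ℤˣ)
    (x : n → ℝ) :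
    diagonal (fun i => ((u i : ℤ) : ℂ)) * diagonal (fun i => (x i : ℂ)) =
      diagonal (fun i => (((((u i * v i : ℤˣ) : ℤ) : ℝ) * x i : ℝ) : ℂ)) *
        diagonal (fun i => ((v i : ℤ) : ℂ)) := by
  rw [diagonal_mul_diagonal, diagonal_mul_diagonal]
  congr 1
  funext i
  have hv : ((v i : ℤ) : ℂ) * ((v i : ℤ) : ℂ) = 1 := by
    rw [← Int.cast_mul, ← Units.val_mul, Int.units_mul_self, Units.val_one, Int.cast_one]
  push_cast
  linear_combination (-((u i : ℤ) : ℂ) * x i) * hv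

theorem diagonal_mem_unitaryGroup_of_sign {n : Type*} [Fintype n] [DecidableEq n] {s : n → ℂ}
    (hs : ∀ i, s i = 1 ∨ s i = -1) : diagonal s ∈ unitaryGroup n ℂ := by
  rw [mem_unitaryGroup_iff', star_eq_conjTranspose, diagonal_conjTranspose, diagonal_mul_diagonal,
    ← diagonal_one]
  congr 1
  funext i
  rcases hs i with h | h <;> simp [h]

theorem fromBlocks_mem_unitaryGroup {n R : Type*} [Fintype n] [DecidableEq n] [CommRing R]
    [StarRing R] {P S : Matrix n n R} (hP : P ∈ unitaryGroup n R) (hS : S ∈ unitaryGroup n R) :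
    fromBlocks P 0 0 S ∈ unitaryGroup (n ⊕ n) R := by
  rw [mem_unitaryGroup_iff', star_eq_conjTranspose] at *
  simp [fromBlocks_conjTranspose, fromBlocks_multiply, hP, hS]

theorem mul_sub_mul_eq_conj {m ι R : Type*} [Fintype m] [DecidableEq m] [CommRing R] [StarRing R]
    {V : Matrix m m R} (hV : V ∈ unitaryGroup m R) (X Y : Matrix m ι R) (B : Matrix m m R) :
    V * (X - B * Y) = V * X - V * B * Vᴴ * (V * Y) := by
  rw [Matrix.mul_assoc _ Vᴴ, ← Matrix.mul_assoc Vᴴ, ← star_eq_conjTranspose,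
    mem_unitaryGroup_iff'.mp hV, Matrix.one_mul, Matrix.mul_sub, Matrix.mul_assoc]

theorem blockDiag_mul_weightedShift_sub {n ι R : Type*} [Fintype n] [DecidableEq n] [CommRing R]
    [StarRing R] {ρ Q d ε : ℤ → Matrix n n R}
    (hleft : ∀ k, ε k * Q k * ρ k = d k * (ε (k + 1) * Q k))
    (hright : ∀ k, ε (k + 1) * Q k * ρ k = d k * (ε k * Q k))
    (hunit : ∀ k j, ε k * Q j ∈ unitaryGroup n R)
    (B : ℤ → Matrix (n ⊕ n) (n ⊕ n) R) (ψ₁ ψ₂ : ℤ → Matrix n ι R) (k : ℤ) :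
    fromBlocks (ε k * Q k) 0 0 (ε k * Q (k - 1)) *
        (fromRows (ρ k * ψ₂ (k + 1)) (ρ (k - 1) * ψ₁ (k - 1)) - B k * fromRows (ψ₁ k) (ψ₂ k))
      = fromRows (d k * (ε (k + 1) * Q k * ψ₂ (k + 1)))
          (d (k - 1) * (ε (k - 1) * Q (k - 1) * ψ₁ (k - 1)))
        - (fromBlocks (ε k * Q k) 0 0 (ε k * Q (k - 1)) * B k *
            (fromBlocks (ε k * Q k) 0 0 (ε k * Q (k - 1)))ᴴ) *
          fromRows (ε k * Q k * ψ₁ k) (ε k * Q (k - 1) * ψ₂ k) := by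
  have hprev := hright (k - 1)
  rw [sub_add_cancel] at hprev
  rw [mul_sub_mul_eq_conj (fromBlocks_mem_unitaryGroup (hunit k k) (hunit k (k - 1)))]
  simp only [fromBlocks_mul_fromRows, Matrix.zero_mul, add_zero, zero_add, ← Matrix.mul_assoc,
    hleft, hprev]

theorem exists_unitary_sign_diagonal_intertwining {n : Type*} [Fintype n] [DecidableEq n]
    {ρ : ℤ → Matrix n n ℂ} (hρ : ∀ k, (ρ k).IsHermitian) (hρu : ∀ k, IsUnit (ρ k)) :
    ∃ (Q d ε : ℤ → Matrix n n ℂ),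
      (∀ k, Q k ∈ unitaryGroup n ℂ) ∧
      (∀ k, ∃ δ : n → ℝ, (∀ i, 0 < δ i) ∧ d k = diagonal fun i => (δ i : ℂ)) ∧
      (∀ k, ∃ s : n → ℂ, (∀ i, s i = 1 ∨ s i = -1) ∧ ε k = diagonal s) ∧
      (∀ k, ε k * Q k * ρ k = d k * (ε (k + 1) * Q k)) ∧
      (∀ k, ε (k + 1) * Q k * ρ k = d k * (ε k * Q k)) := by
  let Λ k := (hρ k).eigenvalues
  obtain ⟨e, he⟩ := exists_units_mul_succ_mul_pos Λ fun k => (hρ k).eigenvalues_ne_zero (hρu k)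
  let sgn k : n → ℂ := fun i => ((e k i : ℤ) : ℂ)
  let δ k : n → ℝ := fun i => (((e k i * e (k + 1) i : ℤˣ) : ℤ) : ℝ) * Λ k i
  have hQρ k : star ((hρ k).eigenvectorUnitary : Matrix n n ℂ) * ρ k =
      diagonal (fun i => (Λ k i : ℂ)) * star ((hρ k).eigenvectorUnitary : Matrix n n ℂ) :=
    (hρ k).star_eigenvectorUnitary_mul
  refine ⟨fun k => star ((hρ k).eigenvectorUnitary : Matrix n n ℂ),
    fun k => diagonal fun i => (δ k i : ℂ), fun k => diagonal (sgn k),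
    fun k => Unitary.star_mem (SetLike.coe_mem _), fun k => ⟨δ k, he k, rfl⟩,
    fun k => ⟨sgn k, fun i => ?_, rfl⟩, fun k => ?_, fun k => ?_⟩
  · rcases Int.units_eq_one_or (e k i) with h | h <;> simp [sgn, h]
  · rw [Matrix.mul_assoc, hQρ, ← Matrix.mul_assoc, ← Matrix.mul_assoc,
      diagonal_units_mul_diagonal (e k) (e (k + 1))]
  · rw [Matrix.mul_assoc, hQρ, ← Matrix.mul_assoc, ← Matrix.mul_assoc,
      diagonal_units_mul_diagonal (e (k + 1)) (e k)]
    simp only [mul_comm (e (k + 1) _)]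
    rfl

theorem stmt4_general {m r : ℕ} (ρ : ℤ → Matrix (Fin m) (Fin m) ℂ)
    (B : ℤ → Matrix (Fin m ⊕ Fin m) (Fin m ⊕ Fin m) ℂ)
    (hρ : ∀ k, (ρ k)ᴴ = ρ k) (hρu : ∀ k, IsUnit (ρ k)) :
    ∃ (Q d ε : ℤ → Matrix (Fin m) (Fin m) ℂ),
      (∀ k, Q k ∈ Matrix.unitaryGroup (Fin m) ℂ) ∧
      (∀ k, ∃ δ : Fin m → ℝ, (∀ i, 0 < δ i) ∧ d k = Matrix.diagonal fun i => (δ i : ℂ)) ∧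
      (∀ k, ∃ s : Fin m → ℂ, (∀ i, s i = 1 ∨ s i = -1) ∧ ε k = Matrix.diagonal s) ∧
      (∀ (ψ₁ ψ₂ : ℤ → Matrix (Fin m) (Fin r) ℂ) (k : ℤ),
        fromBlocks (ε k * Q k) 0 0 (ε k * Q (k - 1)) *
          (fromRows (ρ k * ψ₂ (k + 1)) (ρ (k - 1) * ψ₁ (k - 1))
            - B k * fromRows (ψ₁ k) (ψ₂ k))
        = fromRows (d k * (ε (k + 1) * Q k * ψ₂ (k + 1)))
            (d (k - 1) * (ε (k - 1) * Q (k - 1) * ψ₁ (k - 1)))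
          - (fromBlocks (ε k * Q k) 0 0 (ε k * Q (k - 1)) * B k *
              (fromBlocks (ε k * Q k) 0 0 (ε k * Q (k - 1)))ᴴ) *
            fromRows (ε k * Q k * ψ₁ k) (ε k * Q (k - 1) * ψ₂ k)) := by
  obtain ⟨Q, d, ε, hQ, hd, hε, hleft, hright⟩ :=
    exists_unitary_sign_diagonal_intertwining hρ hρu
  have hunit k j : ε k * Q j ∈ unitaryGroup (Fin m) ℂ := by
    obtain ⟨s, hs, hεs⟩ := hε k
    rw [hεs]
    exact mul_mem (diagonal_mem_unitaryGroup_of_sign hs) (hQ j)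
  exact ⟨Q, d, ε, hQ, hd, hε, blockDiag_mul_weightedShift_sub hleft hright hunit B⟩

/-- Unitary reduction to a diagonal positive definite weight:
there exist unitaries Q(k), diagonal positive definite real d(k) and diagonal sign
matrices ε̃(k) such that conjugating the difference expression 𝒮_ρ − B by the block
transformations U_ε(k)U_ρ(k) = diag(ε̃(k)Q(k), ε̃(k)Q(k−1)) yields 𝒮_d − ℬ with
ℬ the conjugated (self-adjoint) coefficient. -/
theorem stmt4 {m r : ℕ} (ρ : ℤ → Matrix (Fin m) (Fin m) ℂ)
    (B : ℤ → Matrix (Fin m ⊕ Fin m) (Fin m ⊕ Fin m) ℂ)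
    (hρ : ∀ k, (ρ k)ᴴ = ρ k) (hρu : ∀ k, IsUnit (ρ k))
    (hB : ∀ k, (B k)ᴴ = B k) :
    ∃ (Q d ε : ℤ → Matrix (Fin m) (Fin m) ℂ),
      (∀ k, Q k ∈ Matrix.unitaryGroup (Fin m) ℂ) ∧
      (∀ k, ∃ δ : Fin m → ℝ, (∀ i, 0 < δ i) ∧ d k = Matrix.diagonal fun i => (δ i : ℂ)) ∧
      (∀ k, ∃ s : Fin m → ℂ, (∀ i, s i = 1 ∨ s i = -1) ∧ ε k = Matrix.diagonal s) ∧
      (∀ (ψ₁ ψ₂ : ℤ → Matrix (Fin m) (Fin r) ℂ) (k : ℤ),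
        fromBlocks (ε k * Q k) 0 0 (ε k * Q (k - 1)) *
          (fromRows (ρ k * ψ₂ (k + 1)) (ρ (k - 1) * ψ₁ (k - 1))
            - B k * fromRows (ψ₁ k) (ψ₂ k))
        = fromRows (d k * (ε (k + 1) * Q k * ψ₂ (k + 1)))
            (d (k - 1) * (ε (k - 1) * Q (k - 1) * ψ₁ (k - 1)))
          - (fromBlocks (ε k * Q k) 0 0 (ε k * Q (k - 1)) * B k *
              (fromBlocks (ε k * Q k) 0 0 (ε k * Q (k - 1)))ᴴ) *
            fromRows (ε k * Q k * ψ₁ k) (ε k * Q (k - 1) * ψ₂ k)) :=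
  stmt4_general ρ B hρ hρu
end

section
/- Symmetry of the finite-interval M-function: Under the standing hypotheses (ρ > 0, A ≥ 0, B self-adjoint, Atkinson definiteness, invertibility conditions), let Θ(z,·), Φ(z,·) be the normalized fundamental solutions with Ψ̂(z,k₀) = I_ρ(k₀)^{-1/2}(α* Jα*), let β satisfy ββ*=I_m, βJβ*=0, and define M(z,ℓ,k₀,α̃,β̃) = −[β̃Φ̂(z,ℓ)]^{-1}[β̃Θ̂(z,ℓ)] whenever β̃Φ̂(z,ℓ) is invertible. Then M(z̄,ℓ,k₀,α̃,β̃) = M(z,ℓ,k₀,α̃,β̃)*. -/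
open Matrix ComplexOrder

/-- The standard 2m×2m symplectic matrix J = [[0, I], [-I, 0]]. -/
def Jmat (m : ℕ) : Matrix (Fin m ⊕ Fin m) (Fin m ⊕ Fin m) ℂ :=
  Matrix.fromBlocks 0 1 (-1) 0

/-- The positive semidefinite square root, with the definition `Matrix.PosSemidef.sqrt` had
in Mathlib of December 2024 (since removed from Mathlib). -/
noncomputable def Matrix.PosSemidef.sqrt {n 𝕜 : Type*} [Fintype n] [DecidableEq n] [RCLike 𝕜]
    {A : Matrix n n 𝕜} (hA : A.PosSemidef) : Matrix n n 𝕜 :=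
  hA.1.eigenvectorUnitary.1 * diagonal ((↑) ∘ (√·) ∘ hA.1.eigenvalues) *
    (star hA.1.eigenvectorUnitary : Matrix n n 𝕜)

/-! For a solution `X` of the system at `w` and a solution `Y` at `w̄`, the Lagrange bracket
`Ŷ(k)ᴴ J_ρ(k) X̂(k)` does not depend on `k`, because `(w̄ A + B)ᴴ = w A + B`. Applied to the
fundamental matrices `Ψ = (Θ Φ)` at `z` and `z̄`, and evaluated at `k₀`, where the normalization
turns `P(w) := I_ρ^{1/2} Ψ̂(w)` into the matrix `(α* Jα*)`, it gives `P(z̄,ℓ)ᴴ J P(z,ℓ) = -J`,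
hence `P(z,ℓ) J P(z̄,ℓ)ᴴ = -J`. Compressing with `β` and using `β J βᴴ = 0` yields
`(βΘ̂(z))(βΦ̂(z̄))ᴴ = (βΦ̂(z))(βΘ̂(z̄))ᴴ`, which is `M(z̄) = M(z)ᴴ` after multiplying by the inverses. -/

namespace Matrix

theorem fromRows_fromCols_eq_fromCols_fromRows {R m₁ m₂ n₁ n₂ : Type*} (a : Matrix m₁ n₁ R)
    (b : Matrix m₁ n₂ R) (c : Matrix m₂ n₁ R) (d : Matrix m₂ n₂ R) :
    fromRows (fromCols a b) (fromCols c d) = fromCols (fromRows a c) (fromRows b d) := by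
  rw [fromRows_fromCols_eq_fromBlocks, fromCols_fromRows_eq_fromBlocks]

variable {R : Type*} [CommRing R] {n p q : Type*} [Fintype n]

def IsSolution (ρ : ℤ → Matrix n n R) (S : ℤ → Matrix (n ⊕ n) (n ⊕ n) R)
    (x₁ x₂ : ℤ → Matrix n p R) : Prop :=
  ∀ k, fromRows (ρ k * x₂ (k + 1)) (ρ (k - 1) * x₁ (k - 1)) = S k * fromRows (x₁ k) (x₂ k)

theorem IsSolution.fromCols {ρ : ℤ → Matrix n n R} {S : ℤ → Matrix (n ⊕ n) (n ⊕ n) R}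
    {x₁ x₂ : ℤ → Matrix n p R} {y₁ y₂ : ℤ → Matrix n q R}
    (hx : IsSolution ρ S x₁ x₂) (hy : IsSolution ρ S y₁ y₂) :
    IsSolution ρ S (fun k ↦ Matrix.fromCols (x₁ k) (y₁ k))
      (fun k ↦ Matrix.fromCols (x₂ k) (y₂ k)) := by
  intro k
  simp only [mul_fromCols, fromRows_fromCols_eq_fromCols_fromRows, hx k, hy k]

theorem mul_mul_eq_neg_of_mul_mul_eq_neg [DecidableEq n] {J X Y : Matrix n n R} (hJ : J * J = -1)
    (h : Y * J * X = -J) : X * J * Y = -J := by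
  have hJJ : J * -J = 1 := by rw [Matrix.mul_neg, hJ, neg_neg]
  have hinv : J * Y * J * X = 1 := by
    rw [Matrix.mul_assoc J Y, Matrix.mul_assoc J, h, hJJ]
  calc X * J * Y = X * (J * Y * J) * -J := by
        simp only [Matrix.mul_assoc, hJJ, Matrix.mul_one]
    _ = -J := by rw [mul_eq_one_comm.mp hinv, Matrix.one_mul]

variable [StarRing R]

/-- The Lagrange bracket `Ŷ(k)ᴴ J_ρ(k) X̂(k)`, where `X̂(k) = (x₁ k, x₂ (k+1))`. -/
def wronskian (ρ : ℤ → Matrix n n R) (x₁ x₂ : ℤ → Matrix n p R) (y₁ y₂ : ℤ → Matrix n q R)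
    (k : ℤ) : Matrix q p R :=
  (fromRows (y₁ k) (y₂ (k + 1)))ᴴ * fromBlocks 0 (ρ k) (-ρ k) 0 * fromRows (x₁ k) (x₂ (k + 1))

variable {ρ : ℤ → Matrix n n R} {x₁ x₂ : ℤ → Matrix n p R} {y₁ y₂ : ℤ → Matrix n q R}

theorem wronskian_eq {k : ℤ} (hρ : (ρ k)ᴴ = ρ k) :
    wronskian ρ x₁ x₂ y₁ y₂ k = (y₁ k)ᴴ * (ρ k * x₂ (k + 1)) - (ρ k * y₂ (k + 1))ᴴ * x₁ k := by
  simp only [wronskian, conjTranspose_fromRows_eq_fromCols_conjTranspose, fromCols_mul_fromBlocks,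
    fromCols_mul_fromRows, conjTranspose_mul, hρ, Matrix.mul_zero, Matrix.mul_neg,
    Matrix.neg_mul, Matrix.mul_assoc, zero_add, add_zero]
  abel

theorem wronskian_sub_wronskian_sub_one (hρ : ∀ k, (ρ k)ᴴ = ρ k)
    {S T : ℤ → Matrix (n ⊕ n) (n ⊕ n) R} (hx : IsSolution ρ S x₁ x₂)
    (hy : IsSolution ρ T y₁ y₂) (k : ℤ) :
    wronskian ρ x₁ x₂ y₁ y₂ k - wronskian ρ x₁ x₂ y₁ y₂ (k - 1)
      = (fromRows (y₁ k) (y₂ k))ᴴ * (S k - (T k)ᴴ) * fromRows (x₁ k) (x₂ k) := by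
  have hsplit : (fromRows (y₁ k) (y₂ k))ᴴ * (S k - (T k)ᴴ) * fromRows (x₁ k) (x₂ k)
      = (fromRows (y₁ k) (y₂ k))ᴴ * (S k * fromRows (x₁ k) (x₂ k))
        - (T k * fromRows (y₁ k) (y₂ k))ᴴ * fromRows (x₁ k) (x₂ k) := by
    simp only [Matrix.mul_sub, Matrix.sub_mul, conjTranspose_mul, Matrix.mul_assoc]
  rw [hsplit, ← hx k, ← hy k, wronskian_eq (hρ k), wronskian_eq (hρ (k - 1)), sub_add_cancel]
  simp only [conjTranspose_fromRows_eq_fromCols_conjTranspose, fromCols_mul_fromRows,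
    conjTranspose_mul, hρ, Matrix.mul_assoc]
  abel

theorem wronskian_eq_wronskian (hρ : ∀ k, (ρ k)ᴴ = ρ k)
    {S T : ℤ → Matrix (n ⊕ n) (n ⊕ n) R} (hST : ∀ k, (T k)ᴴ = S k)
    (hx : IsSolution ρ S x₁ x₂) (hy : IsSolution ρ T y₁ y₂) (j k : ℤ) :
    wronskian ρ x₁ x₂ y₁ y₂ j = wronskian ρ x₁ x₂ y₁ y₂ k := by
  have hper : Function.Periodic (wronskian ρ x₁ x₂ y₁ y₂) 1 := fun i ↦ by
    have := wronskian_sub_wronskian_sub_one hρ hx hy (i + 1)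
    rwa [hST, sub_self, Matrix.mul_zero, Matrix.zero_mul, add_sub_cancel_right, sub_eq_zero] at this
  simpa using (hper.int_mul_eq j).trans (hper.int_mul_eq k).symm

variable [DecidableEq n]

theorem neg_inv_mul_eq_conjTranspose {F F' T T' : Matrix n n R} (hF : IsUnit F)
    (hF' : IsUnit F') (h : T * F'ᴴ = F * T'ᴴ) : -(F'⁻¹ * T') = (-(F⁻¹ * T))ᴴ := by
  have hFH : IsUnit Fᴴ.det := by
    rw [det_conjTranspose]; exact ((isUnit_iff_isUnit_det F).mp hF).star
  have h' : T' * Fᴴ = F' * Tᴴ := by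
    simpa only [conjTranspose_mul, conjTranspose_conjTranspose] using (congrArg conjTranspose h).symm
  rw [conjTranspose_neg, conjTranspose_mul, conjTranspose_nonsing_inv, neg_inj]
  calc F'⁻¹ * T' = F'⁻¹ * (T' * Fᴴ * (Fᴴ)⁻¹) := by rw [mul_nonsing_inv_cancel_right _ _ hFH]
    _ = Tᴴ * (Fᴴ)⁻¹ := by
      rw [h', Matrix.mul_assoc, nonsing_inv_mul_cancel_left _ _ ((isUnit_iff_isUnit_det F').mp hF')]

theorem PosSemidef.isHermitian_sqrt {𝕜 : Type*} [RCLike 𝕜] {A : Matrix n n 𝕜}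
    (hA : A.PosSemidef) : hA.sqrt.IsHermitian := by
  have hdiag : star ((↑) ∘ (√·) ∘ hA.1.eigenvalues : n → 𝕜) = (↑) ∘ (√·) ∘ hA.1.eigenvalues := by
    ext; simp
  simp only [IsHermitian, PosSemidef.sqrt, conjTranspose_mul, diagonal_conjTranspose, hdiag,
    star_eq_conjTranspose, conjTranspose_conjTranspose, Matrix.mul_assoc]

theorem PosSemidef.sqrt_mul_self {𝕜 : Type*} [RCLike 𝕜] {A : Matrix n n 𝕜}
    (hA : A.PosSemidef) : hA.sqrt * hA.sqrt = A := by
  let U : Matrix n n 𝕜 := hA.1.eigenvectorUnitary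
  let E := diagonal ((↑) ∘ (√·) ∘ hA.1.eigenvalues : n → 𝕜)
  suffices U * (E * (star U * U) * E) * star U = A by
    simpa only [PosSemidef.sqrt, ← Matrix.mul_assoc] using this
  have hEE : E * E = diagonal ((↑) ∘ hA.1.eigenvalues) := by
    rw [diagonal_mul_diagonal]
    congr! with i
    simp [← pow_two, ← RCLike.ofReal_pow, Real.sq_sqrt (hA.eigenvalues_nonneg i)]
  have h := hA.1.spectral_theorem
  rw [Unitary.conjStarAlgAut_apply] at h
  simpa [U, hEE, Matrix.mul_assoc] using h.symm

theorem PosSemidef.conjTranspose_sqrt_mul_sqrt {𝕜 : Type*} [RCLike 𝕜] {A : Matrix n n 𝕜}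
    (hA : A.PosSemidef) : hA.sqrtᴴ * hA.sqrt = A := by
  rw [hA.isHermitian_sqrt.eq, hA.sqrt_mul_self]

theorem PosDef.isUnit_sqrt {𝕜 : Type*} [RCLike 𝕜] {A : Matrix n n 𝕜} (hA : A.PosDef) :
    IsUnit hA.posSemidef.sqrt :=
  isUnit_of_mul_isUnit_left (by rw [PosSemidef.sqrt_mul_self]; exact hA.isUnit)

end Matrix

theorem Jmat_mul_self (m : ℕ) : Jmat m * Jmat m = -1 := by
  simp [Jmat, fromBlocks_multiply, ← fromBlocks_one, fromBlocks_neg]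

theorem conjTranspose_Jmat (m : ℕ) : (Jmat m)ᴴ = -Jmat m := by
  simp [Jmat, fromBlocks_conjTranspose, fromBlocks_neg]

theorem conjTranspose_fromBlocks_mul_Jmat_mul {m : ℕ} (s : Matrix (Fin m) (Fin m) ℂ) :
    (fromBlocks s 0 0 s)ᴴ * Jmat m * fromBlocks s 0 0 s = fromBlocks 0 (sᴴ * s) (-(sᴴ * s)) 0 := by
  simp [Jmat, fromBlocks_conjTranspose, fromBlocks_multiply]

theorem fromCols_mul_Jmat_mul_conjTranspose_fromCols {m : ℕ} {ι : Type*}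
    (a b c d : Matrix ι (Fin m) ℂ) :
    fromCols a b * Jmat m * (fromCols c d)ᴴ = a * dᴴ - b * cᴴ := by
  simp only [Jmat, fromCols_mul_fromBlocks, conjTranspose_fromCols_eq_fromRows_conjTranspose,
    fromCols_mul_fromRows, Matrix.mul_zero, Matrix.mul_neg, Matrix.mul_one, Matrix.neg_mul,
    zero_add, add_zero]
  abel

theorem conjTranspose_fromCols_mul_Jmat_mul_fromCols {m : ℕ}
    {α : Matrix (Fin m) (Fin m ⊕ Fin m) ℂ} (h1 : α * αᴴ = 1) (h2 : α * Jmat m * αᴴ = 0) :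
    (fromCols αᴴ (Jmat m * αᴴ))ᴴ * Jmat m * fromCols αᴴ (Jmat m * αᴴ) = -Jmat m := by
  have h2' : α * (Jmat m * αᴴ) = 0 := by rw [← Matrix.mul_assoc, h2]
  simp only [conjTranspose_fromCols_eq_fromRows_conjTranspose, fromRows_mul, Matrix.mul_fromCols,
    conjTranspose_mul, conjTranspose_conjTranspose, conjTranspose_Jmat, Matrix.neg_mul,
    Matrix.mul_assoc, ← Matrix.mul_assoc (Jmat m) (Jmat m), Jmat_mul_self, h2', Matrix.mul_neg,
    Matrix.neg_mul, Matrix.one_mul, h1, neg_neg]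
  simp [fromCols_fromRows_eq_fromBlocks, Jmat, fromBlocks_neg]

theorem mul_Jmat_mul_conjTranspose_eq_zero {m : ℕ} {ι : Type*} [Fintype ι]
    {X Y : Matrix (Fin m ⊕ Fin m) (Fin m ⊕ Fin m) ℂ} {β : Matrix ι (Fin m ⊕ Fin m) ℂ}
    (hXY : Yᴴ * Jmat m * X = -Jmat m) (hβ : β * Jmat m * βᴴ = 0) :
    (β * X) * Jmat m * (β * Y)ᴴ = 0 := by
  have hYX := mul_mul_eq_neg_of_mul_mul_eq_neg (Jmat_mul_self m) hXY
  calc (β * X) * Jmat m * (β * Y)ᴴ = β * (X * Jmat m * Yᴴ) * βᴴ := by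
        simp only [conjTranspose_mul, Matrix.mul_assoc]
    _ = 0 := by rw [hYX, Matrix.mul_neg, Matrix.neg_mul, hβ, neg_zero]

theorem conjTranspose_mul_Jmat_mul_eq_neg_Jmat {m : ℕ} {ρ : ℤ → Matrix (Fin m) (Fin m) ℂ}
    (hρ : ∀ k, (ρ k)ᴴ = ρ k) {S T : ℤ → Matrix (Fin m ⊕ Fin m) (Fin m ⊕ Fin m) ℂ}
    (hST : ∀ k, (T k)ᴴ = S k) {x₁ x₂ y₁ y₂ : ℤ → Matrix (Fin m) (Fin m ⊕ Fin m) ℂ}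
    (hx : IsSolution ρ S x₁ x₂) (hy : IsSolution ρ T y₁ y₂)
    {α : Matrix (Fin m) (Fin m ⊕ Fin m) ℂ} (hα1 : α * αᴴ = 1) (hα2 : α * Jmat m * αᴴ = 0)
    {k₀ ℓ : ℤ} {s₀ s : Matrix (Fin m) (Fin m) ℂ} (hs₀ : s₀ᴴ * s₀ = ρ k₀) (hs₀_unit : IsUnit s₀)
    (hs : sᴴ * s = ρ ℓ)
    (hx₀ : fromRows (x₁ k₀) (x₂ (k₀ + 1)) = (fromBlocks s₀ 0 0 s₀)⁻¹ * fromCols αᴴ (Jmat m * αᴴ))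
    (hy₀ : fromRows (y₁ k₀) (y₂ (k₀ + 1)) = (fromBlocks s₀ 0 0 s₀)⁻¹ * fromCols αᴴ (Jmat m * αᴴ)) :
    (fromBlocks s 0 0 s * fromRows (y₁ ℓ) (y₂ (ℓ + 1)))ᴴ * Jmat m *
      (fromBlocks s 0 0 s * fromRows (x₁ ℓ) (x₂ (ℓ + 1))) = -Jmat m := by
  have hW : ∀ k (t : Matrix (Fin m) (Fin m) ℂ), tᴴ * t = ρ k →
      wronskian ρ x₁ x₂ y₁ y₂ k = (fromBlocks t 0 0 t * fromRows (y₁ k) (y₂ (k + 1)))ᴴ * Jmat m *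
        (fromBlocks t 0 0 t * fromRows (x₁ k) (x₂ (k + 1))) := by
    intro k t ht
    rw [wronskian, ← ht, ← conjTranspose_fromBlocks_mul_Jmat_mul, conjTranspose_mul]
    simp only [Matrix.mul_assoc]
  have hD₀ : IsUnit (fromBlocks s₀ 0 0 s₀).det := by
    rw [det_fromBlocks_zero₂₁]
    exact ((isUnit_iff_isUnit_det s₀).mp hs₀_unit).mul ((isUnit_iff_isUnit_det s₀).mp hs₀_unit)
  rw [← hW ℓ s hs, wronskian_eq_wronskian hρ hST hx hy ℓ k₀, hW k₀ s₀ hs₀, hx₀, hy₀,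
    mul_nonsing_inv_cancel_left _ _ hD₀]
  exact conjTranspose_fromCols_mul_Jmat_mul_fromCols hα1 hα2

theorem stmt8_general {m : ℕ} (ρ : ℤ → Matrix (Fin m) (Fin m) ℂ)
    (A B : ℤ → Matrix (Fin m ⊕ Fin m) (Fin m ⊕ Fin m) ℂ)
    (hρ : ∀ k, (ρ k).PosDef) (hA : ∀ k, (A k).PosSemidef) (hB : ∀ k, (B k)ᴴ = B k)
    (k₀ ℓ : ℤ)
    (α β : Matrix (Fin m) (Fin m ⊕ Fin m) ℂ)
    (hα1 : α * αᴴ = 1) (hα2 : α * Jmat m * αᴴ = 0)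
    (hβ2 : β * Jmat m * βᴴ = 0)
    (Θ₁ Θ₂ Φ₁ Φ₂ : ℂ → ℤ → Matrix (Fin m) (Fin m) ℂ)
    (hsolΘ : ∀ (w : ℂ) (k : ℤ),
        fromRows (ρ k * Θ₂ w (k + 1)) (ρ (k - 1) * Θ₁ w (k - 1))
          = (w • A k + B k) * fromRows (Θ₁ w k) (Θ₂ w k))
    (hsolΦ : ∀ (w : ℂ) (k : ℤ),
        fromRows (ρ k * Φ₂ w (k + 1)) (ρ (k - 1) * Φ₁ w (k - 1))
          = (w • A k + B k) * fromRows (Φ₁ w k) (Φ₂ w k))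
    (hnorm : ∀ w : ℂ,
        fromCols (fromRows (Θ₁ w k₀) (Θ₂ w (k₀ + 1))) (fromRows (Φ₁ w k₀) (Φ₂ w (k₀ + 1)))
          = (fromBlocks (hρ k₀).posSemidef.sqrt 0 0 (hρ k₀).posSemidef.sqrt)⁻¹ *
            fromCols αᴴ (Jmat m * αᴴ))
    (z : ℂ)
    (hz : IsUnit (β * fromBlocks (hρ ℓ).posSemidef.sqrt 0 0 (hρ ℓ).posSemidef.sqrt *
        fromRows (Φ₁ z ℓ) (Φ₂ z (ℓ + 1))))
    (hzc : IsUnit (β * fromBlocks (hρ ℓ).posSemidef.sqrt 0 0 (hρ ℓ).posSemidef.sqrt *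
        fromRows (Φ₁ (star z) ℓ) (Φ₂ (star z) (ℓ + 1)))) :
    -((β * fromBlocks (hρ ℓ).posSemidef.sqrt 0 0 (hρ ℓ).posSemidef.sqrt *
          fromRows (Φ₁ (star z) ℓ) (Φ₂ (star z) (ℓ + 1)))⁻¹ *
        (β * fromBlocks (hρ ℓ).posSemidef.sqrt 0 0 (hρ ℓ).posSemidef.sqrt *
          fromRows (Θ₁ (star z) ℓ) (Θ₂ (star z) (ℓ + 1))))
    = (-((β * fromBlocks (hρ ℓ).posSemidef.sqrt 0 0 (hρ ℓ).posSemidef.sqrt *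
          fromRows (Φ₁ z ℓ) (Φ₂ z (ℓ + 1)))⁻¹ *
        (β * fromBlocks (hρ ℓ).posSemidef.sqrt 0 0 (hρ ℓ).posSemidef.sqrt *
          fromRows (Θ₁ z ℓ) (Θ₂ z (ℓ + 1)))))ᴴ := by
  have hST : ∀ k, (star z • A k + B k)ᴴ = z • A k + B k := fun k ↦ by
    rw [conjTranspose_add, conjTranspose_smul, (hA k).1.eq, hB k, star_star]
  have hP := conjTranspose_mul_Jmat_mul_eq_neg_Jmat (fun k ↦ (hρ k).1.eq) hST
    (IsSolution.fromCols (hsolΘ z) (hsolΦ z)) (IsSolution.fromCols (hsolΘ (star z)) (hsolΦ (star z)))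
    hα1 hα2 (hρ k₀).posSemidef.conjTranspose_sqrt_mul_sqrt (hρ k₀).isUnit_sqrt
    (hρ ℓ).posSemidef.conjTranspose_sqrt_mul_sqrt
    (by rw [fromRows_fromCols_eq_fromCols_fromRows, hnorm])
    (by rw [fromRows_fromCols_eq_fromCols_fromRows, hnorm])
  rw [fromRows_fromCols_eq_fromCols_fromRows, fromRows_fromCols_eq_fromCols_fromRows,
    mul_fromCols, mul_fromCols] at hP
  have hβ := mul_Jmat_mul_conjTranspose_eq_zero hP hβ2
  rw [mul_fromCols, mul_fromCols, fromCols_mul_Jmat_mul_conjTranspose_fromCols, sub_eq_zero] at hβ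
  simp only [← Matrix.mul_assoc] at hβ
  exact neg_inv_mul_eq_conjTranspose hz hzc hβ

/-- Symmetry of the finite-interval M-function:
M(z̄,ℓ,k₀,α̃,β̃) = M(z,ℓ,k₀,α̃,β̃)*, where
M(w,ℓ,k₀,α̃,β̃) = −[β̃Φ̂(w,ℓ)]^{-1}[β̃Θ̂(w,ℓ)] and Ψ = (Θ Φ) is the fundamental
solution normalized by Ψ̂(w,k₀) = I_ρ(k₀)^{-1/2}(α* Jα*). -/
theorem stmt8 {m : ℕ} (ρ : ℤ → Matrix (Fin m) (Fin m) ℂ)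
    (A B : ℤ → Matrix (Fin m ⊕ Fin m) (Fin m ⊕ Fin m) ℂ)
    (hρ : ∀ k, (ρ k).PosDef) (hA : ∀ k, (A k).PosSemidef) (hB : ∀ k, (B k)ᴴ = B k)
    (hinv : ∀ (w : ℂ) (k : ℤ), IsUnit ((w • A k + B k).toBlocks₁₂))
    (k₀ ℓ : ℤ) (hℓ : ℓ ≠ k₀)
    (α β : Matrix (Fin m) (Fin m ⊕ Fin m) ℂ)
    (hα1 : α * αᴴ = 1) (hα2 : α * Jmat m * αᴴ = 0)
    (hβ1 : β * βᴴ = 1) (hβ2 : β * Jmat m * βᴴ = 0)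
    (Θ₁ Θ₂ Φ₁ Φ₂ : ℂ → ℤ → Matrix (Fin m) (Fin m) ℂ)
    (hsolΘ : ∀ (w : ℂ) (k : ℤ),
        fromRows (ρ k * Θ₂ w (k + 1)) (ρ (k - 1) * Θ₁ w (k - 1))
          = (w • A k + B k) * fromRows (Θ₁ w k) (Θ₂ w k))
    (hsolΦ : ∀ (w : ℂ) (k : ℤ),
        fromRows (ρ k * Φ₂ w (k + 1)) (ρ (k - 1) * Φ₁ w (k - 1))
          = (w • A k + B k) * fromRows (Φ₁ w k) (Φ₂ w k))
    (hnorm : ∀ w : ℂ,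
        fromCols (fromRows (Θ₁ w k₀) (Θ₂ w (k₀ + 1))) (fromRows (Φ₁ w k₀) (Φ₂ w (k₀ + 1)))
          = (fromBlocks (hρ k₀).posSemidef.sqrt 0 0 (hρ k₀).posSemidef.sqrt)⁻¹ *
            fromCols αᴴ (Jmat m * αᴴ))
    (hAtk : ∀ (w : ℂ) (φ₁ φ₂ : ℤ → Matrix (Fin m) (Fin 1) ℂ),
        (∀ k : ℤ, fromRows (ρ k * φ₂ (k + 1)) (ρ (k - 1) * φ₁ (k - 1))
          = (w • A k + B k) * fromRows (φ₁ k) (φ₂ k)) →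
        (¬ ∀ k, φ₁ k = 0 ∧ φ₂ k = 0) →
        ∀ c d : ℤ, c < d →
          (∑ k ∈ Finset.Icc (c + 1) d,
            (fromRows (φ₁ k) (φ₂ k))ᴴ * A k * fromRows (φ₁ k) (φ₂ k)).PosDef)
    (z : ℂ)
    (hz : IsUnit (β * fromBlocks (hρ ℓ).posSemidef.sqrt 0 0 (hρ ℓ).posSemidef.sqrt *
        fromRows (Φ₁ z ℓ) (Φ₂ z (ℓ + 1))))
    (hzc : IsUnit (β * fromBlocks (hρ ℓ).posSemidef.sqrt 0 0 (hρ ℓ).posSemidef.sqrt *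
        fromRows (Φ₁ (star z) ℓ) (Φ₂ (star z) (ℓ + 1)))) :
    -((β * fromBlocks (hρ ℓ).posSemidef.sqrt 0 0 (hρ ℓ).posSemidef.sqrt *
          fromRows (Φ₁ (star z) ℓ) (Φ₂ (star z) (ℓ + 1)))⁻¹ *
        (β * fromBlocks (hρ ℓ).posSemidef.sqrt 0 0 (hρ ℓ).posSemidef.sqrt *
          fromRows (Θ₁ (star z) ℓ) (Θ₂ (star z) (ℓ + 1))))
    = (-((β * fromBlocks (hρ ℓ).posSemidef.sqrt 0 0 (hρ ℓ).posSemidef.sqrt *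
          fromRows (Φ₁ z ℓ) (Φ₂ z (ℓ + 1)))⁻¹ *
        (β * fromBlocks (hρ ℓ).posSemidef.sqrt 0 0 (hρ ℓ).posSemidef.sqrt *
          fromRows (Θ₁ z ℓ) (Θ₂ z (ℓ + 1)))))ᴴ :=
  stmt8_general ρ A B hρ hA hB k₀ ℓ α β hα1 hα2 hβ2 Θ₁ Θ₂ Φ₁ Φ₂ hsolΘ hsolΦ hnorm z hz hzc
end

section
/- Riccati equation for solutions of the discrete Hamiltonian system: Suppose Ψ(z,·) ∈ ℂ^{2m×m} solves ρ(k)ψ₂(k+1) = (zA₁₁(k)+B₁₁(k))ψ₁(k) + (zA₁₂(k)+B₁₂(k))ψ₂(k) and ρ(k−1)ψ₁(k−1) = (zA₂₁(k)+B₂₁(k))ψ₁(k) + (zA₂₂(k)+B₂₂(k))ψ₂(k), and suppose ψ₁(k), ψ₂(k) are invertible for k in a discrete interval and zA₂₁+B₂₁ is invertible. Then V(z,k) := ρ(k)ψ₂(k+1)ψ₁(k)^{-1} satisfies the Riccati equation V(k) = (zA₁₁(k)+B₁₁(k)) + (zA₁₂(k)+B₁₂(k))[ρ(k−1)V(k−1)^{-1}ρ(k−1)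 − (zA₂₂(k)+B₂₂(k))]^{-1}(zA₂₁(k)+B₂₁(k)), provided the indicated inverses exist. -/
/-! Dividing the second equation on the right by `ψ₂(k)` turns the bracket into
`(zA₂₁+B₂₁) ψ₁(k) ψ₂(k)⁻¹`, so the right-hand side collapses to
`(zA₁₁+B₁₁) + (zA₁₂+B₁₂) ψ₂(k) ψ₁(k)⁻¹`, which is the first equation divided on the right by `ψ₁(k)`. -/

open Matrix

namespace Matrix

variable {n R : Type*} [Fintype n] [DecidableEq n] [CommRing R]

theorem mul_nonsing_inv_eq_add_of_eq_add {p a b x y : Matrix n n R} (h : p = a * x + b * y)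
    (hx : IsUnit x) : p * x⁻¹ = a + b * y * x⁻¹ := by
  rw [h, add_mul, mul_nonsing_inv_cancel_right _ _ ((isUnit_iff_isUnit_det x).mp hx)]

theorem mul_nonsing_inv_mul_mul_nonsing_inv {r x : Matrix n n R} (y : Matrix n n R)
    (hr : IsUnit r) (hx : IsUnit x) : r * (r * y * x⁻¹)⁻¹ * r = r * x * y⁻¹ := by
  rw [mul_inv_rev, mul_inv_rev, nonsing_inv_nonsing_inv _ ((isUnit_iff_isUnit_det x).mp hx)]
  simp only [← mul_assoc]
  exact nonsing_inv_mul_cancel_right _ _ ((isUnit_iff_isUnit_det r).mp hr)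

theorem nonsing_inv_mul_mul_nonsing_inv (c x : Matrix n n R) {y : Matrix n n R}
    (hy : IsUnit y) : (c * x * y⁻¹)⁻¹ = y * x⁻¹ * c⁻¹ := by
  rw [mul_inv_rev, mul_inv_rev, nonsing_inv_nonsing_inv _ ((isUnit_iff_isUnit_det y).mp hy),
    mul_assoc]

end Matrix

theorem stmt14_general {m : ℕ} (ρ : ℤ → Matrix (Fin m) (Fin m) ℂ)
    (A₁₁ A₁₂ A₂₁ A₂₂ B₁₁ B₁₂ B₂₁ B₂₂ : ℤ → Matrix (Fin m) (Fin m) ℂ)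
    (hρu : ∀ j, IsUnit (ρ j))
    (z : ℂ) (ψ₁ ψ₂ : ℤ → Matrix (Fin m) (Fin m) ℂ) (k : ℤ)
    (heq1 : ρ k * ψ₂ (k + 1)
        = (z • A₁₁ k + B₁₁ k) * ψ₁ k + (z • A₁₂ k + B₁₂ k) * ψ₂ k)
    (heq2 : ρ (k - 1) * ψ₁ (k - 1)
        = (z • A₂₁ k + B₂₁ k) * ψ₁ k + (z • A₂₂ k + B₂₂ k) * ψ₂ k)
    (hψ₁ : IsUnit (ψ₁ k)) (hψ₁' : IsUnit (ψ₁ (k - 1))) (hψ₂ : IsUnit (ψ₂ k))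
    (h21 : IsUnit (z • A₂₁ k + B₂₁ k)) :
    ρ k * ψ₂ (k + 1) * (ψ₁ k)⁻¹
      = (z • A₁₁ k + B₁₁ k) + (z • A₁₂ k + B₁₂ k) *
          (ρ (k - 1) * (ρ (k - 1) * ψ₂ ((k - 1) + 1) * (ψ₁ (k - 1))⁻¹)⁻¹ * ρ (k - 1)
            - (z • A₂₂ k + B₂₂ k))⁻¹ *
          (z • A₂₁ k + B₂₁ k) := by
  set C := z • A₂₁ k + B₂₁ k
  set D := z • A₂₂ k + B₂₂ k
  have hbracket : ρ (k - 1) * (ρ (k - 1) * ψ₂ ((k - 1) + 1) * (ψ₁ (k - 1))⁻¹)⁻¹ * ρ (k - 1) - D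
      = C * ψ₁ k * (ψ₂ k)⁻¹ := by
    rw [sub_add_cancel, mul_nonsing_inv_mul_mul_nonsing_inv _ (hρu (k - 1)) hψ₁',
      mul_nonsing_inv_eq_add_of_eq_add (heq2.trans (add_comm _ _)) hψ₂, add_sub_cancel_left]
  rw [hbracket, nonsing_inv_mul_mul_nonsing_inv _ _ hψ₂,
    mul_nonsing_inv_eq_add_of_eq_add heq1 hψ₁, mul_assoc _ _ C,
    nonsing_inv_mul_cancel_right _ _ ((isUnit_iff_isUnit_det C).mp h21), mul_assoc]

/-- Riccati equation. If Ψ = (ψ₁, ψ₂) solves the block system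
ρ(k)ψ₂(k+1) = (zA₁₁+B₁₁)ψ₁(k) + (zA₁₂+B₁₂)ψ₂(k),
ρ(k−1)ψ₁(k−1) = (zA₂₁+B₂₁)ψ₁(k) + (zA₂₂+B₂₂)ψ₂(k),
with the indicated invertibility, then V(k) = ρ(k)ψ₂(k+1)ψ₁(k)^{-1} satisfies
V(k) = (zA₁₁+B₁₁) + (zA₁₂+B₁₂)[ρ(k−1)V(k−1)^{-1}ρ(k−1) − (zA₂₂+B₂₂)]^{-1}(zA₂₁+B₂₁). -/
theorem stmt14 {m : ℕ} (ρ : ℤ → Matrix (Fin m) (Fin m) ℂ)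
    (A₁₁ A₁₂ A₂₁ A₂₂ B₁₁ B₁₂ B₂₁ B₂₂ : ℤ → Matrix (Fin m) (Fin m) ℂ)
    (hρu : ∀ j, IsUnit (ρ j))
    (z : ℂ) (ψ₁ ψ₂ : ℤ → Matrix (Fin m) (Fin m) ℂ) (k : ℤ)
    (heq1 : ρ k * ψ₂ (k + 1)
        = (z • A₁₁ k + B₁₁ k) * ψ₁ k + (z • A₁₂ k + B₁₂ k) * ψ₂ k)
    (heq2 : ρ (k - 1) * ψ₁ (k - 1)
        = (z • A₂₁ k + B₂₁ k) * ψ₁ k + (z • A₂₂ k + B₂₂ k) * ψ₂ k)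
    (hψ₁ : IsUnit (ψ₁ k)) (hψ₁' : IsUnit (ψ₁ (k - 1))) (hψ₂ : IsUnit (ψ₂ k))
    (h21 : IsUnit (z • A₂₁ k + B₂₁ k))
    (hV : IsUnit (ρ (k - 1) * ψ₂ ((k - 1) + 1) * (ψ₁ (k - 1))⁻¹))
    (hbr : IsUnit (ρ (k - 1) * (ρ (k - 1) * ψ₂ ((k - 1) + 1) * (ψ₁ (k - 1))⁻¹)⁻¹ * ρ (k - 1)
        - (z • A₂₂ k + B₂₂ k))) :
    ρ k * ψ₂ (k + 1) * (ψ₁ k)⁻¹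
      = (z • A₁₁ k + B₁₁ k) + (z • A₁₂ k + B₁₂ k) *
          (ρ (k - 1) * (ρ (k - 1) * ψ₂ ((k - 1) + 1) * (ψ₁ (k - 1))⁻¹)⁻¹ * ρ (k - 1)
            - (z • A₂₂ k + B₂₂ k))⁻¹ *
          (z • A₂₁ k + B₂₁ k) :=
  stmt14_general ρ A₁₁ A₁₂ A₂₁ A₂₂ B₁₁ B₁₂ B₂₁ B₂₂ hρu z ψ₁ ψ₂ k heq1 heq2 hψ₁ hψ₁' hψ₂ h21
end
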